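/- arXiv:0907.1563 — 4 statements merged into one kernel-verified Lean document; each statement's English description precedes it below -/
import Mathlib

section
/- Let p be a prime, q = p^r, n ≥ 2 an integer with p ∤ n, and χ a Dirichlet character modulo q with χ(−1) = −1. Define h(a) = (n−1)/2 − ⌊na/q⌋ for 1 ≤ a ≤ q−1 with p ∤ a. Then Σ_a h(a)·conj(χ(a)) = (1/q)·(χ(n) − n)·S_q(conj(χ)), where S_q(ψ) = Σ_{a=0}^{q−1} a·ψ(a). -/
open Finset

lemma sum_range_eq_sum_zmod {q : ℕ} [NeZero q] (f : ZMod q → ℂ) :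
    ∑ a ∈ range q, f (a : ZMod q) = ∑ x : ZMod q, f x := by
  refine Finset.sum_nbij' (fun a => (a : ZMod q)) (fun x => x.val) ?_ ?_ ?_ ?_ ?_
  · intro a _; exact Finset.mem_univ _
  · intro x _; exact Finset.mem_range.mpr (ZMod.val_lt x)
  · intro a ha; exact ZMod.val_natCast_of_lt (Finset.mem_range.mp ha)
  · intro x _; exact ZMod.natCast_rightInverse x
  · intro a _; rfl

/-- Let `p` be a prime, `q = p^r`, `n ≥ 2` with `p ∤ n`, and `χ` a Dirichlet character
modulo `q` with `χ(−1) = −1`. With `h(a) = (n−1)/2 − ⌊na/q⌋` (for `1 ≤ a ≤ q−1`, `p ∤ a`),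
one has `Σ_a h(a)·conj(χ(a)) = (1/q)(χ(n) − n)·S_q(conj χ)` where
`S_q(ψ) = Σ_{a=0}^{q−1} a·ψ(a)`. -/
theorem stmt4 (p r n q : ℕ) (hp : p.Prime) (hq : q = p ^ r) (hn : 2 ≤ n)
    (hpn : ¬ p ∣ n) (χ : DirichletCharacter ℂ q) (hχ : χ (-1) = -1) :
    ∑ a ∈ (range q).filter (fun a => ¬ p ∣ a),
        (((n : ℂ) - 1) / 2 - ((n * a / q : ℕ) : ℂ)) * (starRingEnd ℂ) (χ (a : ZMod q))
      = (1 / (q : ℂ)) * (χ (n : ZMod q) - (n : ℂ)) *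
          ∑ a ∈ range q, (a : ℂ) * (starRingEnd ℂ) (χ (a : ZMod q)) := by
  -- basic facts about q
  have hq1 : q ≠ 1 := by
    rintro rfl
    have h1 : ((-1 : ZMod 1)) = 1 := Subsingleton.elim _ _
    rw [h1, map_one] at hχ
    norm_num at hχ
  have hr0 : r ≠ 0 := by rintro rfl; simp at hq; exact hq1 hq
  have hq0 : q ≠ 0 := by subst hq; exact pow_ne_zero _ hp.pos.ne'
  haveI : NeZero q := ⟨hq0⟩
  have hqC : (q : ℂ) ≠ 0 := Nat.cast_ne_zero.mpr hq0
  have hpq : p ∣ q := hq ▸ dvd_pow_self p hr0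
  have hne : χ ≠ 1 := by
    rintro rfl
    rw [MulChar.one_apply isUnit_one.neg] at hχ
    norm_num at hχ
  -- n is a unit mod q
  have hcop : n.Coprime q := by
    subst hq
    exact Nat.Coprime.pow_right _ (hp.coprime_iff_not_dvd.mpr hpn).symm
  have hu : IsUnit ((n : ZMod q)) := (ZMod.isUnit_iff_coprime n q).mpr hcop
  obtain ⟨u, hu'⟩ := hu
  set ψ : ZMod q → ℂ := fun x => (starRingEnd ℂ) (χ x) with hψ
  -- ψ is multiplicative
  have hψmul : ∀ x y : ZMod q, ψ (x * y) = ψ x * ψ y := by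
    intro x y; simp only [hψ, map_mul]
  -- conj(χ u⁻¹) = χ n
  have hconj : ψ ((u⁻¹ : (ZMod q)ˣ) : ZMod q) = χ (n : ZMod q) := by
    have hz : ‖χ ((u : (ZMod q)ˣ) : ZMod q)‖ = 1 := χ.unit_norm_eq_one u
    have hmul : χ ((u⁻¹ : (ZMod q)ˣ) : ZMod q) * χ ((u : (ZMod q)ˣ) : ZMod q) = 1 := by
      rw [← map_mul, Units.inv_mul, map_one]
    have hinv : χ ((u⁻¹ : (ZMod q)ˣ) : ZMod q) = (χ ((u : (ZMod q)ˣ) : ZMod q))⁻¹ :=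
      eq_inv_of_mul_eq_one_left hmul
    show (starRingEnd ℂ) (χ ((u⁻¹ : (ZMod q)ˣ) : ZMod q)) = χ (n : ZMod q)
    rw [← hu', hinv, map_inv₀, ← Complex.inv_eq_conj hz, inv_inv]
  -- Drop the filter: terms with p ∣ a vanish
  have hfilter : ∑ a ∈ (range q).filter (fun a => ¬ p ∣ a),
        (((n : ℂ) - 1) / 2 - ((n * a / q : ℕ) : ℂ)) * ψ (a : ZMod q)
      = ∑ a ∈ range q, (((n : ℂ) - 1) / 2 - ((n * a / q : ℕ) : ℂ)) * ψ (a : ZMod q) := by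
    refine Finset.sum_subset (Finset.filter_subset _ _) ?_
    intro a ha hna
    have hpa : p ∣ a := by
      by_contra h
      exact hna (Finset.mem_filter.mpr ⟨ha, h⟩)
    have hnu : ¬ IsUnit ((a : ZMod q)) := by
      rw [ZMod.isUnit_iff_coprime]
      intro hc
      have h1 : p ∣ Nat.gcd a q := Nat.dvd_gcd hpa hpq
      rw [Nat.Coprime] at hc
      rw [hc] at h1
      exact hp.ne_one (Nat.dvd_one.mp h1)
    rw [hψ]
    simp [χ.map_nonunit hnu]
  -- sum of ψ over range q is 0
  have hzero : ∑ a ∈ range q, ψ (a : ZMod q) = 0 := by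
    rw [sum_range_eq_sum_zmod ψ]
    simp only [hψ]
    rw [← map_sum, MulChar.sum_eq_zero_of_ne_one hne, map_zero]
  -- abbreviation for the main sum
  set S : ℂ := ∑ a ∈ range q, (a : ℂ) * ψ (a : ZMod q) with hS
  have hS' : S = ∑ x : ZMod q, ((x.val : ℕ) : ℂ) * ψ x := by
    calc S = ∑ a ∈ range q, (fun x : ZMod q => ((x.val : ℕ) : ℂ) * ψ x) (a : ZMod q) := by
          rw [hS]
          refine Finset.sum_congr rfl fun a ha => ?_
          simp only
          rw [ZMod.val_natCast_of_lt (Finset.mem_range.mp ha)]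
      _ = ∑ x : ZMod q, ((x.val : ℕ) : ℂ) * ψ x :=
          sum_range_eq_sum_zmod (fun x : ZMod q => ((x.val : ℕ) : ℂ) * ψ x)
  -- the twisted sum
  have hT : ∑ a ∈ range q, ((n * a % q : ℕ) : ℂ) * ψ (a : ZMod q) = χ (n : ZMod q) * S := by
    have step1 : ∀ a ∈ range q, ((n * a % q : ℕ) : ℂ) * ψ (a : ZMod q)
        = (fun x : ZMod q => ((((n : ZMod q) * x).val : ℕ) : ℂ) * ψ x) (a : ZMod q) := by
      intro a _
      have h2 : ((n : ZMod q) * (a : ZMod q)).val = n * a % q := by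
        rw [← Nat.cast_mul, ZMod.val_natCast]
      simp only [← h2]
    rw [Finset.sum_congr rfl step1,
      sum_range_eq_sum_zmod (fun x : ZMod q => ((((n : ZMod q) * x).val : ℕ) : ℂ) * ψ x)]
    have hequiv : ∑ x : ZMod q, ((((n : ZMod q) * x).val : ℕ) : ℂ) * ψ x
        = ∑ y : ZMod q, ((y.val : ℕ) : ℂ) * ψ (((u⁻¹ : (ZMod q)ˣ) : ZMod q) * y) := by
      refine Fintype.sum_equiv (Units.mulLeft u) _ _ ?_
      intro x
      simp only [Units.mulLeft_apply]
      rw [Units.inv_mul_cancel_left, hu']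
    rw [hequiv]
    have h3 : ∀ y : ZMod q, ((y.val : ℕ) : ℂ) * ψ (((u⁻¹ : (ZMod q)ˣ) : ZMod q) * y)
        = χ (n : ZMod q) * (((y.val : ℕ) : ℂ) * ψ y) := by
      intro y
      rw [hψmul, hconj]; ring
    rw [Finset.sum_congr rfl (fun y _ => h3 y), ← Finset.mul_sum, hS']
  -- floor identity
  have hfloor : ∀ a ∈ range q, ((n * a / q : ℕ) : ℂ)
      = ((n : ℂ) * a - ((n * a % q : ℕ) : ℂ)) / q := by
    intro a _
    have h := Nat.div_add_mod (n * a) q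
    have h4 : (q : ℂ) * ((n * a / q : ℕ) : ℂ) + ((n * a % q : ℕ) : ℂ) = (n : ℂ) * a := by
      exact_mod_cast congrArg (Nat.cast : ℕ → ℂ) h
    field_simp
    linear_combination h4
  -- put it together
  calc ∑ a ∈ (range q).filter (fun a => ¬ p ∣ a),
        (((n : ℂ) - 1) / 2 - ((n * a / q : ℕ) : ℂ)) * ψ (a : ZMod q)
      = ∑ a ∈ range q, (((n : ℂ) - 1) / 2 - ((n * a / q : ℕ) : ℂ)) * ψ (a : ZMod q) := hfilter
    _ = ∑ a ∈ range q, ((((n : ℂ) - 1) / 2) * ψ (a : ZMod q)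
          - ((n : ℂ) / q) * ((a : ℂ) * ψ (a : ZMod q))
          + (1 / (q : ℂ)) * (((n * a % q : ℕ) : ℂ) * ψ (a : ZMod q))) := by
        refine Finset.sum_congr rfl fun a ha => ?_
        rw [hfloor a ha]
        field_simp
        ring
    _ = (((n : ℂ) - 1) / 2) * (∑ a ∈ range q, ψ (a : ZMod q))
          - ((n : ℂ) / q) * S
          + (1 / (q : ℂ)) * (∑ a ∈ range q, ((n * a % q : ℕ) : ℂ) * ψ (a : ZMod q)) := by
        rw [Finset.sum_add_distrib, Finset.sum_sub_distrib, ← Finset.mul_sum, ← Finset.mul_sum,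
          ← Finset.mul_sum, ← hS]
    _ = (1 / (q : ℂ)) * (χ (n : ZMod q) - (n : ℂ)) * S := by
        rw [hzero, hT]
        field_simp
        ring
end

section
/- Let p be a prime, r ≥ j ≥ 1 integers, and n a positive integer coprime to p. For a positive integer m coprime to p define h_m: (ℤ/p^mℤ)^× → ℚ by h_m(a) = (n−1)/2 − ⌊na/p^m⌋ where a is the representative with 1 ≤ a ≤ p^m − 1. Let G_j be the kernel of the reduction map (ℤ/p^rℤ)^× → (ℤ/p^jℤ)^×. Then for every a ∈ (ℤ/p^rℤ)^×, one has h_j(a mod p^j) = Σ_{b ∈ G_j} h_r(a·b). -/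
/-- The odd function `h_m(a) = (n−1)/2 − ⌊n·a/p^m⌋` on `(ℤ/p^mℤ)ˣ`, where `a` is
represented by its value in `{1, …, p^m − 1}`. -/
noncomputable def hFun (p m n : ℕ) (a : (ZMod (p ^ m))ˣ) : ℚ :=
  ((n : ℚ) - 1) / 2 - ((n * ((a : ZMod (p ^ m)).val) / p ^ m : ℕ) : ℚ)


lemma hermiteN (T : ℕ) (hT : 0 < T) (m : ℕ) :
    ∑ s ∈ Finset.range T, (m + s) / T = m := by
  induction m with
  | zero =>
    refine Finset.sum_eq_zero fun s hs => ?_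
    exact Nat.div_eq_of_lt (by simpa using Finset.mem_range.mp hs)
  | succ m ih =>
    have h1 := Finset.sum_range_succ' (fun s => (m + s) / T) T
    have h2 := Finset.sum_range_succ (fun s => (m + s) / T) T
    have h3 : (m + T) / T = m / T + 1 := Nat.add_div_right m hT
    have h0 : ∑ s ∈ Finset.range T, (m + 1 + s) / T
        = ∑ s ∈ Finset.range T, (m + (s + 1)) / T :=
      Finset.sum_congr rfl (fun s _ => by rw [show m + 1 + s = m + (s + 1) from by omega])
    rw [h0]
    have h5 : (∑ s ∈ Finset.range T, (m + (s + 1)) / T) + (m + 0) / T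
        = (∑ s ∈ Finset.range T, (m + s) / T) + (m + T) / T := h1.symm.trans h2
    rw [ih, h3, Nat.add_zero] at h5
    have h6 : (∑ s ∈ Finset.range T, (m + (s + 1)) / T) + m / T = (m + 1) + m / T := by
      rw [h5]; ring
    exact Nat.add_right_cancel h6

lemma sum_shiftN (x q T : ℕ) (hq : 0 < q) (hT : 0 < T) :
    ∑ s ∈ Finset.range T, (x + q * s) / (q * T) = x / q := by
  have h : ∀ s, (x + q * s) / (q * T) = (x / q + s) / T := fun s => by
    rw [← Nat.div_div_eq_div_mul, Nat.add_mul_div_left _ _ hq]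
  simp only [h]
  exact hermiteN T hT (x / q)

lemma sum_mulmod {M : Type*} [AddCommMonoid M] (n T : ℕ) (hT : 0 < T)
    (h : Nat.Coprime n T) (f : ℕ → M) :
    ∑ t ∈ Finset.range T, f (n * t % T) = ∑ t ∈ Finset.range T, f t := by
  have hinj : ∀ x ∈ Finset.range T, ∀ y ∈ Finset.range T,
      n * x % T = n * y % T → x = y := by
    intro x hx y hy he
    have hmod : n * x ≡ n * y [MOD T] := he
    have := Nat.ModEq.cancel_left_of_coprime (Nat.Coprime.symm h) hmod
    have hx' := Finset.mem_range.mp hx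
    have hy' := Finset.mem_range.mp hy
    calc x = x % T := (Nat.mod_eq_of_lt hx').symm
      _ = y % T := this
      _ = y := Nat.mod_eq_of_lt hy'
  have himg : (Finset.range T).image (fun t => n * t % T) = Finset.range T := by
    apply Finset.eq_of_subset_of_card_le
    · intro x hx
      simp only [Finset.mem_image] at hx
      obtain ⟨t, _, rfl⟩ := hx
      exact Finset.mem_range.mpr (Nat.mod_lt _ hT)
    · rw [Finset.card_image_of_injOn (fun x hx y hy => hinj x hx y hy)]
  calc ∑ t ∈ Finset.range T, f (n * t % T)
      = ∑ x ∈ (Finset.range T).image (fun t => n * t % T), f x :=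
        (Finset.sum_image hinj).symm
    _ = ∑ t ∈ Finset.range T, f t := by rw [himg]

lemma gaussQ (T : ℕ) : ∑ t ∈ Finset.range T, (t : ℚ) = T * (T - 1) / 2 := by
  induction T with
  | zero => simp
  | succ T ih => rw [Finset.sum_range_succ, ih]; push_cast; ring

lemma keyQ (n A q T : ℕ) (hq : 0 < q) (hT : 0 < T) (hco : Nat.Coprime n T) :
    ∑ t ∈ Finset.range T, ((n * (A + q * t) / (q * T) : ℕ) : ℚ)
      = ((n:ℚ) - 1) * ((T:ℚ) - 1) / 2 + ((n * A / q : ℕ) : ℚ) := by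
  have hqT : 0 < q * T := Nat.mul_pos hq hT
  have hterm : ∀ t : ℕ, n * (A + q * t) / (q * T)
      = (n * A + q * (n * t % T)) / (q * T) + n * t / T := by
    intro t
    have h2 : n * t = T * (n * t / T) + n * t % T := (Nat.div_add_mod _ _).symm
    have h1 : n * (A + q * t) = (n * A + q * (n * t % T)) + (q * T) * (n * t / T) := by
      calc n * (A + q * t) = n * A + q * (n * t) := by ring
        _ = n * A + q * (T * (n * t / T) + n * t % T) := by rw [← h2]
        _ = (n * A + q * (n * t % T)) + (q * T) * (n * t / T) := by ring
    rw [h1, Nat.add_mul_div_left _ _ hqT]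
  have hT' : (T:ℚ) ≠ 0 := by positivity
  have hsplit : ∑ t ∈ Finset.range T, ((n * (A + q * t) / (q * T) : ℕ) : ℚ)
      = (∑ t ∈ Finset.range T, (((n * A + q * (n * t % T)) / (q * T) : ℕ) : ℚ))
        + ∑ t ∈ Finset.range T, ((n * t / T : ℕ) : ℚ) := by
    rw [← Finset.sum_add_distrib]
    exact Finset.sum_congr rfl fun t _ => by rw [hterm t]; push_cast; ring
  rw [hsplit]
  have hS1 : (∑ t ∈ Finset.range T, (((n * A + q * (n * t % T)) / (q * T) : ℕ) : ℚ))
      = ((n * A / q : ℕ) : ℚ) := by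
    rw [sum_mulmod n T hT hco (fun s => (((n * A + q * s) / (q * T) : ℕ) : ℚ))]
    rw [← Nat.cast_sum, sum_shiftN _ _ _ hq hT]
  have hmodsum : ∑ t ∈ Finset.range T, ((n * t % T : ℕ) : ℚ) = (T:ℚ) * ((T:ℚ)-1)/2 := by
    rw [sum_mulmod n T hT hco (fun s => (s : ℚ))]
    exact gaussQ T
  have hS2 : ∑ t ∈ Finset.range T, ((n * t / T : ℕ) : ℚ) = ((n:ℚ)-1)*((T:ℚ)-1)/2 := by
    have hpt : ∀ t : ℕ, ((n * t / T : ℕ) : ℚ) = ((n:ℚ) * t - ((n * t % T : ℕ) : ℚ)) / T := by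
      intro t
      have h2 := Nat.div_add_mod (n * t) T
      have h2' : (T:ℚ) * ((n*t/T : ℕ):ℚ) + ((n*t%T : ℕ):ℚ) = (n:ℚ) * t := by
        exact_mod_cast congrArg (Nat.cast : ℕ → ℚ) h2
      field_simp
      linarith
    rw [Finset.sum_congr rfl fun t _ => hpt t]
    have hsd : ∑ t ∈ Finset.range T, ((n:ℚ) * t - ((n*t%T : ℕ):ℚ)) / T
        = ((n:ℚ) * (∑ t ∈ Finset.range T, (t:ℚ))
            - ∑ t ∈ Finset.range T, ((n*t%T:ℕ):ℚ)) / T := by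
      rw [← Finset.sum_div]
      congr 1
      rw [Finset.sum_sub_distrib, Finset.mul_sum]
    rw [hsd, gaussQ, hmodsum]
    field_simp
  rw [hS1, hS2]
  ring

/-- Let `p` be a prime, `r ≥ j ≥ 1`, `n` positive and coprime to `p`. Let `G_j` be the
kernel of the reduction map `(ℤ/p^rℤ)ˣ → (ℤ/p^jℤ)ˣ`. Then for every `a ∈ (ℤ/p^rℤ)ˣ`,
`h_j(a mod p^j) = Σ_{b ∈ G_j} h_r(a·b)`. -/
theorem stmt9 (p r j n : ℕ) (hp : p.Prime) (hj : 1 ≤ j) (hjr : j ≤ r)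
    (hn : 0 < n) (hpn : ¬ p ∣ n)
    (hdvd : p ^ j ∣ p ^ r) [NeZero (p ^ r)] :
    ∀ a : (ZMod (p ^ r))ˣ,
      hFun p j n (ZMod.unitsMap hdvd a)
        = ∑ b : (ZMod.unitsMap hdvd).ker,
            hFun p r n (a * (b : (ZMod (p ^ r))ˣ)) := by
  intro a
  have hppos : 0 < p := hp.pos
  have hq : 0 < p ^ j := pow_pos hppos j
  haveI : NeZero (p ^ j) := ⟨hq.ne'⟩
  set T := p ^ (r - j) with hTdef
  have hTpos : 0 < T := pow_pos hppos _
  have hqT : p ^ j * T = p ^ r := by rw [hTdef, ← pow_add]; congr 1; omega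
  have hnp : Nat.Coprime n p := (hp.coprime_iff_not_dvd.mpr hpn).symm
  have hco : Nat.Coprime n T := Nat.Coprime.pow_right _ hnp
  set A := ((ZMod.unitsMap hdvd a : (ZMod (p ^ j))ˣ) : ZMod (p ^ j)).val with hAdef
  have hAlt : A < p ^ j := ZMod.val_lt _
  have hcastval : ∀ x : ZMod (p ^ r),
      ((ZMod.castHom hdvd (ZMod (p ^ j))) x).val = x.val % p ^ j := fun x => by
    rw [ZMod.castHom_apply, ← ZMod.natCast_val, ZMod.val_natCast]
  have hcoeMap : ∀ u : (ZMod (p ^ r))ˣ,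
      ((ZMod.unitsMap hdvd u : (ZMod (p ^ j))ˣ) : ZMod (p ^ j))
        = (ZMod.castHom hdvd (ZMod (p ^ j))) (u : ZMod (p ^ r)) := fun u => rfl
  have hmodA : ∀ b : (ZMod.unitsMap hdvd).ker,
      ((a * (b : (ZMod (p ^ r))ˣ) : (ZMod (p ^ r))ˣ) : ZMod (p ^ r)).val % p ^ j = A := by
    intro b
    have hb : ZMod.unitsMap hdvd (b : (ZMod (p ^ r))ˣ) = 1 := b.2
    rw [← hcastval, ← hcoeMap, map_mul, hb, mul_one]
  have hAco : Nat.Coprime A (p ^ j) := ZMod.val_coe_unit_coprime _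
  have hAp : Nat.Coprime A p :=
    Nat.Coprime.coprime_dvd_right (dvd_pow_self p (by omega : j ≠ 0)) hAco
  have hcop : ∀ t : ℕ, Nat.Coprime (A + p ^ j * t) (p ^ r) := by
    intro t
    have h1 : ¬ p ∣ (A + p ^ j * t) := by
      intro hdv
      have h2 : p ∣ p ^ j * t :=
        Dvd.dvd.mul_right (dvd_pow_self p (by omega : j ≠ 0)) t
      have h3 : p ∣ A := (Nat.dvd_add_right h2).mp (by rwa [Nat.add_comm] at hdv)
      have h4 : p ∣ 1 := hAp ▸ Nat.dvd_gcd h3 dvd_rfl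
      exact absurd (Nat.dvd_one.mp h4) hp.ne_one
    have h4 : Nat.Coprime (A + p ^ j * t) p :=
      ((hp.coprime_iff_not_dvd).mpr h1).symm
    exact Nat.Coprime.pow_right _ h4
  have hvalu : ∀ t, t < T →
      ((ZMod.unitOfCoprime (A + p ^ j * t) (hcop t) : (ZMod (p ^ r))ˣ)
        : ZMod (p ^ r)).val = A + p ^ j * t := by
    intro t ht
    rw [ZMod.coe_unitOfCoprime, ZMod.val_natCast, Nat.mod_eq_of_lt]
    calc A + p ^ j * t < p ^ j + p ^ j * t := by omega
      _ = p ^ j * (t + 1) := by ring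
      _ ≤ p ^ j * T := Nat.mul_le_mul_left _ (by omega)
      _ = p ^ r := hqT
  have hkermem : ∀ t : ℕ,
      a⁻¹ * ZMod.unitOfCoprime (A + p ^ j * t) (hcop t) ∈ (ZMod.unitsMap hdvd).ker := by
    intro t
    rw [MonoidHom.mem_ker, map_mul, map_inv]
    have hu : ZMod.unitsMap hdvd (ZMod.unitOfCoprime (A + p ^ j * t) (hcop t))
        = ZMod.unitsMap hdvd a := by
      apply Units.ext
      rw [hcoeMap, hcoeMap, ZMod.coe_unitOfCoprime, map_natCast, Nat.cast_add,
        Nat.cast_mul, ZMod.natCast_self, zero_mul, add_zero, hAdef,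
        ZMod.natCast_val, ZMod.cast_id]
      exact hcoeMap a
    rw [hu]
    exact inv_mul_cancel _
  have hbij : (∑ b : (ZMod.unitsMap hdvd).ker, hFun p r n (a * (b : (ZMod (p ^ r))ˣ)))
      = ∑ t ∈ Finset.range T,
          (((n:ℚ) - 1) / 2 - ((n * (A + p ^ j * t) / (p ^ j * T) : ℕ) : ℚ)) := by
    apply Finset.sum_bij'
      (i := fun (b : (ZMod.unitsMap hdvd).ker) (_ : b ∈ Finset.univ) =>
        ((a * (b : (ZMod (p ^ r))ˣ) : (ZMod (p ^ r))ˣ) : ZMod (p ^ r)).val / p ^ j)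
      (j := fun t ht => ⟨a⁻¹ * ZMod.unitOfCoprime (A + p ^ j * t) (hcop t), hkermem t⟩)
    · intro b _
      rw [Finset.mem_range, Nat.div_lt_iff_lt_mul hq]
      calc ((a * (b : (ZMod (p ^ r))ˣ) : (ZMod (p ^ r))ˣ) : ZMod (p ^ r)).val
          < p ^ r := ZMod.val_lt _
        _ = T * p ^ j := by rw [← hqT]; ring
    · intro t ht
      exact Finset.mem_univ _
    · intro b hb
      apply Subtype.ext
      show a⁻¹ * ZMod.unitOfCoprime _ _ = (b : (ZMod (p ^ r))ˣ)
      have hV : A + p ^ j *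
          (((a * (b : (ZMod (p ^ r))ˣ) : (ZMod (p ^ r))ˣ) : ZMod (p ^ r)).val / p ^ j)
          = ((a * (b : (ZMod (p ^ r))ˣ) : (ZMod (p ^ r))ˣ) : ZMod (p ^ r)).val := by
        have h1 := hmodA b
        have h2 := Nat.div_add_mod
          ((a * (b : (ZMod (p ^ r))ˣ) : (ZMod (p ^ r))ˣ) : ZMod (p ^ r)).val (p ^ j)
        omega
      have hu : ZMod.unitOfCoprime (A + p ^ j *
          (((a * (b : (ZMod (p ^ r))ˣ) : (ZMod (p ^ r))ˣ) : ZMod (p ^ r)).val / p ^ j))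
          (hcop _) = a * (b : (ZMod (p ^ r))ˣ) := by
        apply Units.ext
        rw [ZMod.coe_unitOfCoprime, hV]
        exact ZMod.natCast_rightInverse _
      rw [hu, inv_mul_cancel_left]
    · intro t ht
      show ((a * (a⁻¹ * ZMod.unitOfCoprime (A + p ^ j * t) (hcop t))
          : (ZMod (p ^ r))ˣ) : ZMod (p ^ r)).val / p ^ j = t
      rw [mul_inv_cancel_left, hvalu t (Finset.mem_range.mp ht),
        Nat.add_mul_div_left _ _ hq, Nat.div_eq_of_lt hAlt]
      omega
    · intro b hb
      show hFun p r n _ = _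
      simp only [hFun]
      have h1 := hmodA b
      have h2 := Nat.div_add_mod
        ((a * (b : (ZMod (p ^ r))ˣ) : (ZMod (p ^ r))ˣ) : ZMod (p ^ r)).val (p ^ j)
      have hV : A + p ^ j *
          (((a * (b : (ZMod (p ^ r))ˣ) : (ZMod (p ^ r))ˣ) : ZMod (p ^ r)).val / p ^ j)
          = ((a * (b : (ZMod (p ^ r))ˣ) : (ZMod (p ^ r))ˣ) : ZMod (p ^ r)).val := by
        omega
      rw [hqT, hV]
  rw [hbij, Finset.sum_sub_distrib, Finset.sum_const, Finset.card_range,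
    keyQ n A (p ^ j) T hq hTpos hco]
  simp only [hFun, nsmul_eq_mul]
  ring
end

section
/- Let E be a CM-field that is Galois over ℚ, viewed inside ℂ, with complex conjugation c₀ ∈ Gal(E/ℚ). Let h: Σ_E → ℚ be a function with h(ῡ) = −h(υ) for all embeddings υ (where ῡ = ι∘υ). Let W ⊆ ℚ^{Σ_E} be the ℚ-span of the translated functions σ ↦ h(τ^{−1}σ) for τ ∈ Gal(E/ℚ), and let 𝔮 be the smallest ℚ-subspace of E_− = {e ∈ E : c₀(e) = −e} such that h lies in κ_E(𝔮 ⊗_ℚ ℂ). Then dim_ℚ 𝔮 = dim_ℚ W. -/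
/-!
Let `θ = ∑ τ, h(τ⁻¹) τ` act on `E`. If `h = ∑ₖ cₖ (σ ↦ σ aₖ)` with `aₖ ∈ q` (the coefficients
can be taken in `E` rather than `ℂ`, since `h` is rational), then `θ y = ∑ₖ Tr(cₖ y) aₖ ∈ q`.
Conversely `h` lies in the span coming from `θ(E)`, because for a basis `eᵢ` of `E/ℚ` the vectors
`σ ↦ σ eᵢ` span all functions `Gal(E/ℚ) → E` over `E`. Hence `q = θ(E)`. In the basis
`ρ ↦ ρ⁻¹ ν` built from a normal basis element `ν`, the matrix of `θ` has the translates
`σ ↦ h(ρ⁻¹σ)` as its columns, so `dim θ(E) = dim W`.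
-/

open Module Submodule

section Descent

variable {k K ι : Type*} [Field k] [CommRing K] [Nontrivial K] [Algebra k K] [Finite ι]

theorem algebraMap_comp_mem_span_iff {s : Set (ι → k)} {x : ι → k} :
    algebraMap k K ∘ x ∈ span K ((algebraMap k K ∘ ·) '' s) ↔ x ∈ span k s := by
  classical
  cases nonempty_fintype ι
  refine ⟨fun hx => ?_, fun hx => ?_⟩
  · by_contra hxs
    obtain ⟨f, hfx, hfs⟩ := exists_dual_map_eq_bot_of_notMem hxs inferInstance
    let F : (ι → K) →ₗ[K] K :=
      Fintype.linearCombination K fun i => algebraMap k K (f fun j => if i = j then 1 else 0)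
    have hF : ∀ v, F (algebraMap k K ∘ v) = algebraMap k K (f v) := fun v => by
      conv_rhs => rw [LinearMap.pi_apply_eq_sum_univ f v]
      simp [F, Fintype.linearCombination_apply]
    have hFs : span K ((algebraMap k K ∘ ·) '' s) ≤ LinearMap.ker F := by
      rw [span_le]
      rintro _ ⟨v, hv, rfl⟩
      have : f v = 0 := LinearMap.le_ker_iff_map.mpr hfs (subset_span hv)
      simp [hF, this]
    exact hfx ((algebraMap k K).injective (by simpa [hF] using hFs hx))
  · exact span_le_restrictScalars k K _ <|
      apply_mem_span_image_of_mem_span (LinearMap.compLeft (Algebra.linearMap k K) ι) hx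

end Descent

section Galois

variable {K L : Type*} [Field K] [Field L] [Algebra K L] [FiniteDimensional K L]

theorem span_range_algEquiv_apply_eq_top {ι : Type*} [Finite ι] (e : Basis ι K L) :
    span L (Set.range fun i (σ : Gal(L/K)) => σ (e i)) = ⊤ :=
  span_flip_eq_top_iff_linearIndependent.mpr <|
    ((linearIndependent_algHom_toLinearMap K L L).comp _
      (algEquivEquivAlgHom K L).injective).map' _ (e.constr L).symm.ker

noncomputable def galConv (h : Gal(L/K) → K) : L →ₗ[K] L :=
  ∑ τ, h τ⁻¹ • τ.toLinearMap

variable (h : Gal(L/K) → K)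

@[simp]
theorem galConv_apply (x : L) : galConv h x = ∑ τ, h τ⁻¹ • τ x := by
  simp [galConv]

theorem algEquiv_apply_galConv (σ : Gal(L/K)) (x : L) :
    σ (galConv h x) = ∑ ρ, h (ρ⁻¹ * σ) • ρ x := by
  rw [galConv_apply, map_sum]
  refine Fintype.sum_equiv (Equiv.mulLeft σ) _ _ fun τ => ?_
  simp [AlgEquiv.mul_apply]

theorem galConv_inv_apply (ρ : Gal(L/K)) (x : L) :
    galConv h (ρ⁻¹ x) = ∑ σ, h (ρ⁻¹ * σ) • σ⁻¹ x := by
  rw [galConv_apply]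
  refine Fintype.sum_equiv ((Equiv.inv _).trans (Equiv.mulLeft ρ)) _ _ fun τ => ?_
  simp [AlgEquiv.mul_apply]

theorem range_galConv_le_of_mem_span [IsGalois K L] {p : Submodule K L}
    (hp : (fun σ => algebraMap K L (h σ)) ∈ span L ((fun x (σ : Gal(L/K)) => σ x) '' p)) :
    LinearMap.range (galConv h) ≤ p := by
  rintro _ ⟨y, rfl⟩
  -- `g ↦ ∑ τ, τ (c * g τ⁻¹) * τ y` sends `σ ↦ σ a` to `Tr(c y) • a`, and `h` to `galConv h y`
  have key : ∀ g ∈ span L ((fun x (σ : Gal(L/K)) => σ x) '' p), ∀ c : L,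
      ∑ τ : Gal(L/K), τ (c * g τ⁻¹) * τ y ∈ p := by
    intro g hg
    induction hg using Submodule.span_induction with
    | mem _ hg =>
      obtain ⟨a, ha, rfl⟩ := hg
      intro c
      have : ∑ τ : Gal(L/K), τ (c * τ⁻¹ a) * τ y = Algebra.trace K L (c * y) • a := by
        rw [Algebra.smul_def, trace_eq_sum_automorphisms, Finset.sum_mul]
        refine Finset.sum_congr rfl fun τ _ => ?_
        simp only [AlgEquiv.aut_inv, map_mul, AlgEquiv.apply_symm_apply]
        ring
      exact this ▸ p.smul_mem _ ha
    | zero => simp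
    | add g₁ g₂ _ _ hg₁ hg₂ =>
      intro c
      simpa [mul_add, add_mul, Finset.sum_add_distrib] using add_mem (hg₁ c) (hg₂ c)
    | smul d g _ hg =>
      intro c
      simpa [mul_assoc] using hg (c * d)
  simpa [Algebra.smul_def] using key _ hp 1

theorem mem_span_range_galConv :
    (fun σ => algebraMap K L (h σ)) ∈
      span L ((fun x (σ : Gal(L/K)) => σ x) '' LinearMap.range (galConv h)) := by
  classical
  let e := Module.finBasis K L
  obtain ⟨g, hg⟩ := (mem_span_range_iff_exists_fun L).mp
    (span_range_algEquiv_apply_eq_top e ▸ mem_top (x := Pi.single (1 : Gal(L/K)) (1 : L)))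
  have : (fun σ => algebraMap K L (h σ)) = ∑ i, g i • fun σ : Gal(L/K) => σ (galConv h (e i)) := by
    funext σ
    calc algebraMap K L (h σ) = ∑ ρ, h (ρ⁻¹ * σ) • Pi.single (1 : Gal(L/K)) (1 : L) ρ := by
          simp [Pi.single_apply, Algebra.smul_def]
      _ = ∑ ρ, h (ρ⁻¹ * σ) • ∑ i, g i * ρ (e i) := by
          simp [← hg, Finset.sum_apply]
      _ = _ := by
          simp only [Finset.sum_apply, Pi.smul_apply, smul_eq_mul, algEquiv_apply_galConv,
            Finset.mul_sum, Finset.smul_sum, mul_smul_comm]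
          exact Finset.sum_comm
  rw [this]
  exact sum_mem fun i _ => smul_mem _ _ (subset_span ⟨_, ⟨e i, rfl⟩, rfl⟩)

theorem finrank_range_galConv [IsGalois K L] :
    finrank K (LinearMap.range (galConv h)) =
      finrank K (span K (Set.range fun τ σ : Gal(L/K) => h (τ⁻¹ * σ))) := by
  set b := (IsGalois.normalBasis K L).reindex (Equiv.inv _)
  have hb : ∀ ρ, b ρ = ρ⁻¹ (IsGalois.normalBasis K L 1) := fun ρ =>
    (Basis.reindex_apply ..).trans (IsGalois.normalBasis_apply ρ⁻¹)
  have hTb : galConv h ∘ b = b.equivFun.symm ∘ fun τ σ : Gal(L/K) => h (τ⁻¹ * σ) := by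
    funext ρ
    simp only [Function.comp_apply, Basis.equivFun_symm_apply, hb, galConv_inv_apply]
  have : LinearMap.range (galConv h) =
      (span K (Set.range fun τ σ : Gal(L/K) => h (τ⁻¹ * σ))).map
        (b.equivFun.symm : (Gal(L/K) → K) →ₗ[K] L) := by
    rw [LinearMap.range_eq_map, ← b.span_eq, map_span, ← Set.range_comp, hTb, Set.range_comp,
      map_span]
    rfl
  rw [this, LinearEquiv.finrank_map_eq]

theorem mem_span_algebraMap_apply_iff_range_galConv_le [IsGalois K L] (A : Type*) [CommRing A]
    [Nontrivial A] [Algebra K A] [Algebra L A] [IsScalarTower K L A] (p : Submodule K L) :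
    (fun σ => algebraMap K A (h σ)) ∈
        span A ((fun x (σ : Gal(L/K)) => algebraMap L A (σ x)) '' p) ↔
      LinearMap.range (galConv h) ≤ p := by
  have hφ : (fun x (σ : Gal(L/K)) => algebraMap L A (σ x)) '' p =
      (algebraMap L A ∘ ·) '' ((fun x (σ : Gal(L/K)) => σ x) '' p) := by
    rw [Set.image_image]; rfl
  have hh : (fun σ => algebraMap K A (h σ)) = algebraMap L A ∘ fun σ => algebraMap K L (h σ) := by
    funext σ; exact IsScalarTower.algebraMap_apply K L A (h σ)
  rw [hφ, hh, algebraMap_comp_mem_span_iff]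
  exact ⟨range_galConv_le_of_mem_span h,
    fun hp => span_mono (Set.image_mono hp) (mem_span_range_galConv h)⟩

end Galois

theorem stmt16_general (E : IntermediateField ℚ ℂ) [FiniteDimensional ℚ E] [IsGalois ℚ E]
    (c₀ : E ≃ₐ[ℚ] E)
    (h : (E ≃ₐ[ℚ] E) → ℚ)
    (q : Submodule ℚ E)
    (hqneg : ∀ e ∈ q, c₀ e = -e)
    (hqmem : (fun σ : E ≃ₐ[ℚ] E => (h σ : ℂ)) ∈
      Submodule.span ℂ ((fun e : E => fun σ : E ≃ₐ[ℚ] E => ((σ e : E) : ℂ)) '' q))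
    (hqmin : ∀ q' : Submodule ℚ E, (∀ e ∈ q', c₀ e = -e) →
      ((fun σ : E ≃ₐ[ℚ] E => (h σ : ℂ)) ∈
        Submodule.span ℂ ((fun e : E => fun σ : E ≃ₐ[ℚ] E => ((σ e : E) : ℂ)) '' q')) →
      q ≤ q') :
    Module.finrank ℚ q
      = Module.finrank ℚ (Submodule.span ℚ
          (Set.range fun τ : E ≃ₐ[ℚ] E => fun σ : E ≃ₐ[ℚ] E => h (τ⁻¹ * σ))) := by
  have key := mem_span_algebraMap_apply_iff_range_galConv_le h ℂ
  have hq : q = LinearMap.range (galConv h) :=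
    le_antisymm (hqmin _ (fun e he => hqneg e ((key q).mp hqmem he)) ((key _).mpr le_rfl))
      ((key q).mp hqmem)
  rw [hq, finrank_range_galConv]

/-- Let `E ⊆ ℂ` be a CM-field, Galois over ℚ, with complex conjugation
`c₀ ∈ Gal(E/ℚ)` (so that `c₀` is induced by the complex conjugation of ℂ). Since `E/ℚ`
is Galois, the embeddings `Σ_E` are identified with `Gal(E/ℚ)`. Let `h : Gal(E/ℚ) → ℚ`
satisfy `h(c₀σ) = −h(σ)` (i.e. `h(σ̄) = −h(σ)`), let `W` be the ℚ-span of the translates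
`σ ↦ h(τ⁻¹σ)`, and let `𝔮` be the smallest ℚ-subspace of `E₋ = {e : c₀ e = −e}` such
that `h` lies in `κ_E(𝔮 ⊗ ℂ)` (the ℂ-span of the functions `σ ↦ σ(e)`, `e ∈ 𝔮`). Then
`dim_ℚ 𝔮 = dim_ℚ W`. -/
theorem stmt16 (E : IntermediateField ℚ ℂ) [FiniteDimensional ℚ E] [IsGalois ℚ E]
    (c₀ : E ≃ₐ[ℚ] E)
    (hc₀ : ∀ x : E, ((c₀ x : E) : ℂ) = starRingEnd ℂ (x : ℂ))
    (h : (E ≃ₐ[ℚ] E) → ℚ)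
    (hodd : ∀ σ : E ≃ₐ[ℚ] E, h (c₀ * σ) = - h σ)
    (q : Submodule ℚ E)
    (hqneg : ∀ e ∈ q, c₀ e = -e)
    (hqmem : (fun σ : E ≃ₐ[ℚ] E => (h σ : ℂ)) ∈
      Submodule.span ℂ ((fun e : E => fun σ : E ≃ₐ[ℚ] E => ((σ e : E) : ℂ)) '' q))
    (hqmin : ∀ q' : Submodule ℚ E, (∀ e ∈ q', c₀ e = -e) →
      ((fun σ : E ≃ₐ[ℚ] E => (h σ : ℂ)) ∈
        Submodule.span ℂ ((fun e : E => fun σ : E ≃ₐ[ℚ] E => ((σ e : E) : ℂ)) '' q')) →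
      q ≤ q') :
    Module.finrank ℚ q
      = Module.finrank ℚ (Submodule.span ℚ
          (Set.range fun τ : E ≃ₐ[ℚ] E => fun σ : E ≃ₐ[ℚ] E => h (τ⁻¹ * σ))) :=
  stmt16_general E c₀ h q hqneg hqmem hqmin
end

section
/- Let p be a prime, q = p^r, n a positive integer with p ∤ n, and define f: {a : 1 ≤ a ≤ q−1, p ∤ a} → ℚ by f(a) = (n−1)/2 − ⌊na/q⌋. Then f(a) = 0 for all a if and only if q = 2 or n = 1. -/
/-- Let `p` be a prime, `q = p^r` (with `r ≥ 1`), and `n` a positive integer with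
`p ∤ n`. Define `f(a) = (n−1)/2 − ⌊na/q⌋` for `1 ≤ a ≤ q−1` with `p ∤ a`. Then
`f(a) = 0` for all such `a` if and only if `q = 2` or `n = 1`. -/
theorem stmt19 (p r n : ℕ) (hp : p.Prime) (hr : 0 < r) (hn : 0 < n)
    (hpn : ¬ p ∣ n) :
    (∀ a : ℕ, 0 < a → a < p ^ r → ¬ p ∣ a →
        ((n : ℚ) - 1) / 2 - ((n * a / p ^ r : ℕ) : ℚ) = 0)
      ↔ (p ^ r = 2 ∨ n = 1) := by
  have hpq : ¬ p ^ r ∣ n := fun hd => hpn ((dvd_pow_self p hr.ne').trans hd)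
  have hq2 : 2 ≤ p ^ r := le_trans hp.two_le (Nat.le_self_pow hr.ne' p)
  constructor
  · intro h
    by_cases hq : p ^ r = 2
    · exact Or.inl hq
    · right
      have h1 := h 1 one_pos (by omega) hp.not_dvd_one
      rw [mul_one] at h1
      set m := p ^ r with hm
      set k := n / m with hkdef
      have hnk : (n : ℚ) = 2 * k + 1 := by
        have : ((n : ℚ) - 1) / 2 = (k : ℚ) := by linarith
        field_simp at this
        linarith
      have hnk' : n = 2 * k + 1 := by exact_mod_cast hnk
      have hdm := Nat.div_add_mod n m
      have hs : n % m ≠ 0 := fun h0 => hpq (Nat.dvd_of_mod_eq_zero h0)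
      have h3 : 3 * k ≤ m * k := Nat.mul_le_mul_right k (by omega)
      generalize m * k = T at hdm h3
      omega
  · rintro (hq | hn1)
    · intro a ha hal hpa
      have ha1 : a = 1 := by omega
      subst ha1
      have hp2 : p = 2 := (Nat.prime_dvd_prime_iff_eq hp Nat.prime_two).mp
        (hq ▸ dvd_pow_self p hr.ne')
      subst hp2
      have hodd : n % 2 = 1 := Nat.two_dvd_ne_zero.mp hpn
      obtain ⟨m, hm⟩ : ∃ m, n = 2 * m + 1 := ⟨n / 2, by omega⟩
      rw [hq, hm]
      have : (2 * m + 1) * 1 / 2 = m := by omega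
      rw [this]
      push_cast
      ring
    · subst hn1
      intro a ha hal hpa
      rw [one_mul, Nat.div_eq_of_lt hal]
      norm_num
end
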